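/- If T is an n-quasi strict m-isometry (an n-quasi-m-isometry that is not an n-quasi-(m-1)-isometry), then for any positive integer k, Δ_{m-1,n}(T^k, x) = k^{m-1} Δ_{m-1,n}(T, x) for all x ∈ H; in particular T^k is an n-quasi strict m-isometry. -/

import Mathlib

variable {H : Type*} [NormedAddCommGroup H] [InnerProductSpace ℂ H] [CompleteSpace H]

/-- `Δ_{m,n}(T,x) = ∑_{k=0}^m (-1)^{m-k} C(m,k) ‖T^{k+n} x‖²`. -/
noncomputable def DeltaQ (T : H →L[ℂ] H) (m n : ℕ) (x : H) : ℝ :=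
  ∑ k ∈ Finset.range (m + 1),
    (-1 : ℝ) ^ (m - k) * (m.choose k : ℝ) * ‖(T ^ (k + n)) x‖ ^ 2


/-!
Write `u a = ‖T ^ a x‖²`. Then `Δ_{p,n}(T ^ k, x)` is the `p`-th forward difference of `u` with
step `k` at `k n`, and `Δ_{p,n}(T, T ^ i x)` the one with step `1` at `n + i`. A step-`k` difference
telescopes into `k` translated step-`1` differences, so where the `p`-th step-`1` difference of `u`
is a constant `c`, the `p`-th step-`k` difference is `k ^ p c`. For an `n`-quasi-`m`-isometry the
`m`-th step-`1` difference of `u` vanishes beyond `n`, hence the `(m-1)`-th one is constant there,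
equal to `Δ_{m-1,n}(T, x)`.
-/

open Finset fwdDiff

section fwdDiff

variable {G : Type*} [AddCommGroup G]

theorem fwdDiff_eq_sum_fwdDiff_one (k : ℕ) (f : ℕ → G) :
    Δ_[k] f = ∑ t ∈ range k, fun z ↦ Δ_[1] f (z + t) := by
  funext z
  simp only [fwdDiff, Finset.sum_apply, add_assoc]
  exact (sum_range_sub (fun t ↦ f (z + t)) k).symm

theorem eq_of_fwdDiff_one_eq_zero {g : ℕ → G} {y : ℕ} (hg : ∀ z, y ≤ z → Δ_[1] g z = 0) :
    ∀ z, y ≤ z → g z = g y := by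
  intro z hz
  induction z, hz using Nat.le_induction with
  | base => rfl
  | succ z hz ih => rw [← ih, ← sub_eq_zero]; exact hg z hz

theorem fwdDiff_iter_eq_pow_smul {f : ℕ → G} {p y : ℕ} {c : G}
    (hc : ∀ z, y ≤ z → Δ_[1] ^[p] f z = c) (k : ℕ) : Δ_[k] ^[p] f y = k ^ p • c := by
  induction p generalizing f y with
  | zero => simpa using hc y le_rfl
  | succ p ih =>
    have hc' (t : ℕ) (z : ℕ) (hz : y + t ≤ z) : Δ_[1] ^[p] (Δ_[1] f) z = c := hc z (by omega)
    rw [Function.iterate_succ_apply, fwdDiff_eq_sum_fwdDiff_one, fwdDiff_iter_finsetSum]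
    simp only [Finset.sum_apply, fwdDiff_iter_comp_add, ih (hc' _), sum_const, card_range,
      pow_succ', mul_smul]

end fwdDiff

section DeltaQ

variable {E : Type*} [NormedAddCommGroup E] [InnerProductSpace ℂ E]

theorem deltaQ_pow_eq_fwdDiff_iter (T : E →L[ℂ] E) (k p n : ℕ) (x : E) :
    DeltaQ (T ^ k) p n x = Δ_[k] ^[p] (fun a ↦ ‖(T ^ a) x‖ ^ 2) (k * n) := by
  rw [DeltaQ, fwdDiff_iter_eq_sum_shift]
  refine sum_congr rfl fun j _ ↦ ?_
  rw [← pow_mul, smul_eq_mul, mul_add, mul_comm k j, add_comm (k * n), zsmul_eq_mul]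
  push_cast
  ring

theorem deltaQ_eq_fwdDiff_iter (T : E →L[ℂ] E) (p n : ℕ) (x : E) :
    DeltaQ T p n x = Δ_[1] ^[p] (fun a ↦ ‖(T ^ a) x‖ ^ 2) n := by
  simpa using deltaQ_pow_eq_fwdDiff_iter T 1 p n x

theorem deltaQ_apply_pow_eq_fwdDiff_iter (T : E →L[ℂ] E) (p n i : ℕ) (x : E) :
    DeltaQ T p n ((T ^ i) x) = Δ_[1] ^[p] (fun a ↦ ‖(T ^ a) x‖ ^ 2) (n + i) := by
  simp only [deltaQ_eq_fwdDiff_iter, ← fwdDiff_iter_comp_add, ← mul_apply_eq_comp,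
    ← pow_add]

theorem fwdDiff_iter_eq_zero_of_deltaQ_eq_zero {T : E →L[ℂ] E} {m n : ℕ}
    (hT : ∀ x, DeltaQ T m n x = 0) (x : E) {z : ℕ} (hz : n ≤ z) :
    Δ_[1] ^[m] (fun a ↦ ‖(T ^ a) x‖ ^ 2) z = 0 := by
  obtain ⟨i, rfl⟩ := Nat.exists_eq_add_of_le hz
  rw [← deltaQ_apply_pow_eq_fwdDiff_iter]
  exact hT _

end DeltaQ

theorem pow_nQuasi_strict_mIsometry_general (T : H →L[ℂ] H) (m n : ℕ) (hm : 1 ≤ m)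
    (hT : ∀ x : H, DeltaQ T m n x = 0) (hstrict : ∃ x : H, DeltaQ T (m - 1) n x ≠ 0) :
    ∀ (k : ℕ), 1 ≤ k →
      (∀ x : H, DeltaQ (T ^ k) (m - 1) n x = (k : ℝ) ^ (m - 1) * DeltaQ T (m - 1) n x) ∧
      (∀ x : H, DeltaQ (T ^ k) m n x = 0) ∧
      (∃ x : H, DeltaQ (T ^ k) (m - 1) n x ≠ 0) := by
  intro k hk
  have hkn : n ≤ k * n := Nat.le_mul_of_pos_left n hk
  have hconst (x : H) (z : ℕ) (hz : n ≤ z) :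
      Δ_[1] ^[m - 1] (fun a ↦ ‖(T ^ a) x‖ ^ 2) z = DeltaQ T (m - 1) n x := by
    rw [deltaQ_eq_fwdDiff_iter]
    refine eq_of_fwdDiff_one_eq_zero (fun z hz ↦ ?_) z hz
    rw [← Function.iterate_succ_apply' (fwdDiff 1), Nat.succ_eq_add_one, Nat.sub_add_cancel hm]
    exact fwdDiff_iter_eq_zero_of_deltaQ_eq_zero hT x hz
  have hfirst (x : H) :
      DeltaQ (T ^ k) (m - 1) n x = (k : ℝ) ^ (m - 1) * DeltaQ T (m - 1) n x := by
    rw [deltaQ_pow_eq_fwdDiff_iter, fwdDiff_iter_eq_pow_smul (fun z hz ↦ hconst x z (hkn.trans hz)),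
      nsmul_eq_mul, Nat.cast_pow]
  refine ⟨hfirst, fun x ↦ ?_, ?_⟩
  · have hzero (z : ℕ) (hz : k * n ≤ z) : Δ_[1] ^[m] (fun a ↦ ‖(T ^ a) x‖ ^ 2) z = 0 :=
      fwdDiff_iter_eq_zero_of_deltaQ_eq_zero hT x (hkn.trans hz)
    rw [deltaQ_pow_eq_fwdDiff_iter, fwdDiff_iter_eq_pow_smul hzero, smul_zero]
  · obtain ⟨x, hx⟩ := hstrict
    exact ⟨x, by rw [hfirst x]; exact mul_ne_zero (pow_ne_zero _ (by positivity)) hx⟩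

theorem pow_nQuasi_strict_mIsometry (T : H →L[ℂ] H) (m n : ℕ) (hm : 1 ≤ m) (hn : 1 ≤ n)
    (hT : ∀ x : H, DeltaQ T m n x = 0) (hstrict : ∃ x : H, DeltaQ T (m - 1) n x ≠ 0) :
    ∀ (k : ℕ), 1 ≤ k →
      (∀ x : H, DeltaQ (T ^ k) (m - 1) n x = (k : ℝ) ^ (m - 1) * DeltaQ T (m - 1) n x) ∧
      (∀ x : H, DeltaQ (T ^ k) m n x = 0) ∧
      (∃ x : H, DeltaQ (T ^ k) (m - 1) n x ≠ 0) :=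
  pow_nQuasi_strict_mIsometry_general T m n hm hT hstrict
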